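/- Define ρ : X → Â² ⊆ ℂ² × ℙ¹(ℂ) by ρ(x₁,x₂,x₃,x₄) = ((x₂, x₄), (x₁ : −x₃)) where Â² = {((x,y),(u:v)) : xv = yu} is the blow-up of ℂ² at the origin. Then ρ is well defined on X (i.e., (x₁, x₃) ≠ (0,0) or one uses (x₂ : x₄) instead, and the two prescriptions (x₁ : −x₃) and (x₂ : x₄) agree whenever both are defined), ρ lands in Â², and ρ is surjective onto Â². -/
import Mathlib


def inX (x : Fin 4 → ℂ) : Prop := x 0 * x 3 + x 1 * x 2 = 0 ∧ x ≠ 0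

abbrev P1 := Projectivization ℂ (Fin 2 → ℂ)

def Blowup : Set ((ℂ × ℂ) × P1) :=
  {p | ∃ (u v : ℂ) (h : ![u, v] ≠ 0),
    p.2 = Projectivization.mk ℂ ![u, v] h ∧ p.1.1 * v = p.1.2 * u}

lemma vec_ne_zero {a b : ℂ} : ![a, b] ≠ 0 ↔ a ≠ 0 ∨ b ≠ 0 := by
  rw [Ne, Matrix.cons_eq_zero_iff]
  simp only [Matrix.cons_eq_zero_iff, not_and_or]
  tauto

theorem stmt14 :
    (∀ x : Fin 4 → ℂ, inX x → (![x 0, -(x 2)] ≠ 0 ∨ ![x 1, x 3] ≠ 0)) ∧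
    (∀ x : Fin 4 → ℂ, inX x → ∀ (h1 : ![x 0, -(x 2)] ≠ 0) (h2 : ![x 1, x 3] ≠ 0),
      Projectivization.mk ℂ ![x 0, -(x 2)] h1 = Projectivization.mk ℂ ![x 1, x 3] h2) ∧
    (∀ x : Fin 4 → ℂ, inX x → ∀ (h1 : ![x 0, -(x 2)] ≠ 0),
      ((x 1, x 3), Projectivization.mk ℂ ![x 0, -(x 2)] h1) ∈ Blowup) ∧
    (∀ x : Fin 4 → ℂ, inX x → ∀ (h2 : ![x 1, x 3] ≠ 0),
      ((x 1, x 3), Projectivization.mk ℂ ![x 1, x 3] h2) ∈ Blowup) ∧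
    (∀ p ∈ Blowup, ∃ x : Fin 4 → ℂ, inX x ∧ ∃ h1 : ![x 0, -(x 2)] ≠ 0,
      ((x 1, x 3), Projectivization.mk ℂ ![x 0, -(x 2)] h1) = p) := by
  refine ⟨?_, ?_, ?_, ?_, ?_⟩
  · rintro x ⟨heq, hx⟩
    by_contra h
    push_neg at h
    obtain ⟨h1, h2⟩ := h
    simp only [Matrix.cons_eq_zero_iff, neg_eq_zero] at h1 h2
    apply hx
    funext i
    fin_cases i <;>
      simp only [Pi.zero_apply] <;>
      first
      | exact h1.1 | exact h2.1 | exact h1.2.1 | exact h2.2.1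
  · rintro x ⟨heq, -⟩ h1 h2
    rw [Projectivization.mk_eq_mk_iff]
    rw [vec_ne_zero] at h1 h2
    have key : x 0 * x 3 = -(x 1 * x 2) := by linear_combination heq
    by_cases hx1 : x 1 = 0
    · have hx3 : x 3 ≠ 0 := h2.resolve_left (by simp [hx1])
      have hx0 : x 0 = 0 := by
        have h' : x 0 * x 3 = 0 := by rw [key, hx1]; ring
        exact (mul_eq_zero.mp h').resolve_right hx3
      have hx2 : x 2 ≠ 0 := by
        rcases h1 with h | h
        · exact absurd hx0 h
        · simpa using h
      refine ⟨Units.mk0 (-(x 2) / x 3) (by simp [hx2, hx3]), ?_⟩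
      funext i
      fin_cases i <;> simp [hx0, hx1] <;> field_simp
    · have hx0 : x 0 ≠ 0 := by
        intro hx0
        rw [hx0] at key
        have hx2 : x 2 = 0 := by
          have h' : x 1 * x 2 = 0 := by linear_combination heq - x 3 * hx0
          exact (mul_eq_zero.mp h').resolve_left hx1
        exact h1.elim (fun h => h hx0) (fun h => h (by simp [hx2]))
      refine ⟨Units.mk0 (x 0 / x 1) (by simp [hx0, hx1]), ?_⟩
      funext i
      fin_cases i <;> simp <;> field_simp
      linear_combination heq
  · rintro x ⟨heq, -⟩ h1
    exact ⟨x 0, -(x 2), h1, rfl, by ring_nf; linear_combination -heq⟩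
  · rintro x ⟨heq, -⟩ h2
    exact ⟨x 1, x 3, h2, rfl, by ring⟩
  · rintro ⟨⟨y1, y2⟩, L⟩ ⟨u, v, h, hL, hrel⟩
    refine ⟨![u, y1, -v, y2], ⟨?_, ?_⟩, ?_, ?_⟩
    · show u * y2 + y1 * -v = 0
      linear_combination -hrel
    · intro h0
      apply h
      funext i
      fin_cases i
      · simpa using congrFun h0 0
      · have := congrFun h0 2; simpa using neg_eq_zero.mp (by simpa using this)
    · show ![u, -(-v)] ≠ 0
      simpa using h
    · simp only [Matrix.cons_val_one, Matrix.head_cons]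
      refine Prod.ext rfl ?_
      rw [hL]
      congr 1
      simp
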